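/- Greedy optimality for the log-determinant objective in the orthonormal case (footnote claim): For every d ∈ ℕ, every λ > 0, and every B ∈ ℕ, any sequence n⁽⁰⁾, …, n⁽ᴮ⁾ in ℕ^d with n⁽⁰⁾ = 0 and n⁽ᵗ⁺¹⁾ = n⁽ᵗ⁾ + e_{i_{t+1}}, where i_{t+1} is any index maximizing log(n⁽ᵗ⁾ᵢ + 1 + λ) − log(n⁽ᵗ⁾ᵢ + λ) over i ∈ Fin d, satisfies Σᵢ log(n⁽ᴮ⁾ᵢ + λ) = max { Σᵢ log(nᵢ + λ) : n : Fin d → ℕ, Σᵢ nᵢ ≤ B }. -/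

import Mathlib

/-!
The objective `∑ᵢ φᵢ(nᵢ)` is separable with concave coordinates (decreasing marginal gains).
By induction on the budget `t`, the greedy point `g t` maximises it over `∑ nᵢ ≤ t`: a competitor
`n` of budget `t + 1` either lies below `g t`, or exceeds it in some coordinate `j`; removing one
unit there gives a competitor of budget `t`, and the gain lost is at most the gain of `g t` at `j`
by concavity, hence at most the greedy gain. For `φᵢ(k) = log (k + λ)` the marginal gain is
`log (1 + 1/(k + λ))`, which decreases.
-/

open Finset Function

section Greedy

variable {ι M : Type*} [Fintype ι] [DecidableEq ι]

theorem sum_apply_update_add [AddCommMonoid M] (φ : ι → ℕ → M) (n : ι → ℕ) (i : ι) (m : ℕ) :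
    ∑ j, φ j (update n i m j) + φ i (n i) = ∑ j, φ j (n j) + φ i m := by
  rw [← add_sum_erase _ _ (mem_univ i), ← add_sum_erase _ _ (mem_univ i), update_self,
    sum_congr rfl fun j hj => by rw [update_of_ne (ne_of_mem_erase hj)]]
  abel

theorem sum_update_add_one (n : ι → ℕ) (i : ι) :
    ∑ j, update n i (n i + 1) j = ∑ j, n j + 1 := by
  have := sum_apply_update_add (fun _ k => k) n i (n i + 1)
  omega

def IsGreedyStep (φ : ι → ℕ → ℝ) (m m' : ι → ℕ) : Prop :=
  ∃ i, (∀ j, φ j (m j + 1) - φ j (m j) ≤ φ i (m i + 1) - φ i (m i)) ∧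
    m' = update m i (m i + 1)

variable {φ : ι → ℕ → ℝ}

theorem IsGreedyStep.sum_eq {m m' : ι → ℕ} (h : IsGreedyStep φ m m') :
    ∑ j, m' j = ∑ j, m j + 1 := by
  obtain ⟨i, -, rfl⟩ := h
  exact sum_update_add_one m i

theorem IsGreedyStep.sum_le (hmono : ∀ j, Monotone (φ j))
    (hgain : ∀ j, Antitone fun k => φ j (k + 1) - φ j k) {m m' : ι → ℕ}
    (h : IsGreedyStep φ m m')
    (hopt : ∀ n : ι → ℕ, ∑ j, n j ≤ ∑ j, m j → ∑ j, φ j (n j) ≤ ∑ j, φ j (m j))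
    {n : ι → ℕ} (hn : ∑ j, n j ≤ ∑ j, m j + 1) :
    ∑ j, φ j (n j) ≤ ∑ j, φ j (m' j) := by
  obtain ⟨i, hmax, rfl⟩ := h
  have hstep := sum_apply_update_add φ m i (m i + 1)
  by_cases hle : ∀ j, n j ≤ m j
  · have hnm : ∑ j, φ j (n j) ≤ ∑ j, φ j (m j) := sum_le_sum fun j _ => hmono j (hle j)
    have : φ i (m i) ≤ φ i (m i + 1) := hmono i (Nat.le_succ _)
    linarith
  obtain ⟨j, hj⟩ : ∃ j, m j < n j := by simpa only [not_forall, not_le] using hle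
  have hn' : ∑ k, update n j (n j - 1) k ≤ ∑ k, m k := by
    have := sum_apply_update_add (fun _ k => k) n j (n j - 1)
    omega
  have hremove := sum_apply_update_add φ n j (n j - 1)
  have hexchange : φ j (n j) - φ j (n j - 1) ≤ φ j (m j + 1) - φ j (m j) := by
    simpa only [Nat.sub_add_cancel (Nat.one_le_of_lt hj)] using
      hgain j (Nat.le_sub_one_of_lt hj)
  linarith [hopt _ hn', hmax j]

theorem isGreatest_sum_of_isGreedyStep (hmono : ∀ j, Monotone (φ j))
    (hgain : ∀ j, Antitone fun k => φ j (k + 1) - φ j k) {B : ℕ} {g : ℕ → ι → ℕ} (h0 : g 0 = 0)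
    (hstep : ∀ t < B, IsGreedyStep φ (g t) (g (t + 1))) :
    IsGreatest {v | ∃ n : ι → ℕ, ∑ i, n i ≤ B ∧ v = ∑ i, φ i (n i)} (∑ i, φ i (g B i)) := by
  have hsum : ∀ t ≤ B, ∑ i, g t i = t := by
    intro t ht
    induction t with
    | zero => simp [h0]
    | succ t ih => rw [(hstep t ht).sum_eq, ih (by omega)]
  have hopt : ∀ t ≤ B, ∀ n : ι → ℕ, ∑ i, n i ≤ t → ∑ i, φ i (n i) ≤ ∑ i, φ i (g t i) := by
    intro t ht
    induction t with
    | zero =>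
      intro n hn
      obtain rfl : n = 0 := funext <| (sum_eq_zero_iff.mp (Nat.le_zero.mp hn) · (mem_univ _))
      rw [h0]
    | succ t ih =>
      intro n hn
      have hsum_t := hsum t (by omega)
      exact (hstep t ht).sum_le hmono hgain
        (fun n' hn' => ih (by omega) n' (hn'.trans hsum_t.le)) (by omega)
  exact ⟨⟨g B, (hsum B le_rfl).le, rfl⟩, fun v ⟨n, hn, hv⟩ => hv ▸ hopt B le_rfl n hn⟩

end Greedy

open Real Set

theorem antitoneOn_log_add_one_sub_log : AntitoneOn (fun x => log (x + 1) - log x) (Ioi 0) := by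
  intro a (ha : 0 < a) b (hb : 0 < b) hab
  rw [sub_le_sub_iff, ← log_mul (by positivity) hb.ne', ← log_mul (by positivity) ha.ne']
  exact log_le_log (by positivity) (by nlinarith)

/-- Greedy optimality for the log-determinant objective in the orthonormal case:
any greedy sequence (starting at `0` and at each step adding one unit to a coordinate
maximizing the marginal gain `log(nᵢ+1+λ) − log(nᵢ+λ)`) achieves the maximum of
`∑ᵢ log(nᵢ + λ)` over all `n : Fin d → ℕ` with `∑ᵢ nᵢ ≤ B`. -/
theorem greedy_logdet_optimal
    (d : ℕ) (lam : ℝ) (hlam : 0 < lam) (B : ℕ)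
    (gseq : ℕ → (Fin d → ℕ)) (h0 : gseq 0 = 0)
    (hstep : ∀ t < B, ∃ i : Fin d,
      (∀ j : Fin d,
        Real.log ((gseq t j : ℝ) + 1 + lam) - Real.log ((gseq t j : ℝ) + lam)
          ≤ Real.log ((gseq t i : ℝ) + 1 + lam) - Real.log ((gseq t i : ℝ) + lam)) ∧
      gseq (t + 1) = Function.update (gseq t) i (gseq t i + 1)) :
    IsGreatest {v : ℝ | ∃ n : Fin d → ℕ, (∑ i, n i) ≤ B ∧
        v = ∑ i, Real.log ((n i : ℝ) + lam)}
      (∑ i, Real.log ((gseq B i : ℝ) + lam)) := by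
  have hmono : Monotone fun k : ℕ => log (k + lam) := fun a b hab =>
    log_le_log (by positivity) (by gcongr)
  have hgain : Antitone fun k : ℕ => log ((k + 1 : ℕ) + lam) - log (k + lam) := by
    intro a b hab
    simp only [Nat.cast_add_one, add_right_comm _ (1 : ℝ) lam]
    exact antitoneOn_log_add_one_sub_log (mem_Ioi.mpr (by positivity))
      (mem_Ioi.mpr (by positivity)) (by gcongr)
  refine isGreatest_sum_of_isGreedyStep (φ := fun _ k => log (k + lam)) (fun _ => hmono)
    (fun _ => hgain) h0 fun t ht => ?_
  obtain ⟨i, hmax, hupd⟩ := hstep t ht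
  exact ⟨i, by simpa only [Nat.cast_add_one] using hmax, hupd⟩
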